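/- arXiv:1608.05497 — 3 statements merged into one kernel-verified Lean document; each statement's English description precedes it below -/
import Mathlib

section
/- Let F : ℝⁿ → ℝⁿ (as a map between Euclidean spaces) be twice continuously differentiable at x, let u_0, …, u_N ∈ ℝⁿ and real weights W_0, …, W_N with Σ_i W_i = 1 be fixed. For ε ∈ ℝ define Y_i(ε) = F(x + ε·u_i), Ỹ_i(ε) = F(x) + ε·(fderiv ℝ F x) u_i, their weighted means Ŷ(ε) = Σ_i W_i Y_i(ε) and Ỹ(ε) = Σ_i W_i Ỹ_i(ε), and the covariance matrices P(ε) = Σ_i W_i·(Y_i(ε) − Ŷ(ε))(Y_i(ε) − Ŷ(ε))ᵀ and P̃(ε) = Σ_i W_i·(Ỹ_i(ε) − Ỹ(ε))(Ỹ_i(ε) − Ỹ(ε))ᵀ. Then the covariance error P(ε) − P̃(ε) is little-o of ε ↦ ε² as ε → 0. -/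
/-!
Write `Y_i - Ŷ = B_i + S_i` with `B_i = Ỹ_i - Ỹ`. Because the weights sum to one, the constant
`F x` cancels from `B_i`, leaving `B_i = ε • (DF(x) u_i - ∑ W_k DF(x) u_k) = O(ε)`, while
`S_i` is a weighted combination of first-order Taylor remainders, hence `o(ε)`. The outer
product is bilinear, so `(B + S)(B + S)ᵀ - B Bᵀ = S (B + S)ᵀ + B Sᵀ = o(ε²)`.
-/

open Asymptotics Filter Matrix Topology

attribute [local instance] Matrix.normedAddCommGroup Matrix.normedSpace

section OuterProduct

variable {α R m n : Type*} [NormedRing R] [Fintype m] [Fintype n]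

theorem Matrix.norm_vecMulVec_le (a : m → R) (b : n → R) : ‖vecMulVec a b‖ ≤ ‖a‖ * ‖b‖ :=
  (norm_le_iff (by positivity)).2 fun j k =>
    (norm_mul_le _ _).trans <|
      mul_le_mul (norm_le_pi_norm a j) (norm_le_pi_norm b k) (norm_nonneg _) (norm_nonneg _)

variable {l : Filter α} {f g : α → ℝ}

theorem Asymptotics.IsLittleO.vecMulVec {a : α → m → R} {b : α → n → R}
    (ha : a =o[l] f) (hb : b =O[l] g) :
    (fun t => vecMulVec (a t) (b t)) =o[l] fun t => f t * g t :=
  (IsBigO.of_norm_le fun t => norm_vecMulVec_le (a t) (b t)).trans_isLittleO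
    (ha.norm_left.mul_isBigO hb.norm_left)

theorem Asymptotics.IsBigO.vecMulVec_isLittleO {a : α → m → R} {b : α → n → R}
    (ha : a =O[l] f) (hb : b =o[l] g) :
    (fun t => vecMulVec (a t) (b t)) =o[l] fun t => f t * g t :=
  (IsBigO.of_norm_le fun t => norm_vecMulVec_le (a t) (b t)).trans_isLittleO
    (ha.norm_left.mul_isLittleO hb.norm_left)

theorem isLittleO_vecMulVec_self_sub_vecMulVec_self {a b : α → m → R}
    (hab : (fun t => a t - b t) =o[l] g) (hb : b =O[l] g) :
    (fun t => vecMulVec (a t) (a t) - vecMulVec (b t) (b t)) =o[l] fun t => g t ^ 2 := by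
  have ha : a =O[l] g := (hb.add hab.isBigO).congr_left fun t => add_sub_cancel (b t) (a t)
  have hsplit : ∀ t, vecMulVec (a t) (a t) - vecMulVec (b t) (b t)
      = vecMulVec (a t - b t) (a t) + vecMulVec (b t) (a t - b t) := fun t => by
    rw [sub_vecMulVec, vecMulVec_sub]; abel
  simpa only [hsplit, sq] using (hab.vecMulVec ha).add (hb.vecMulVec_isLittleO hab)

end OuterProduct

section WeightedMean

variable {ι α 𝕜 E : Type*} [Fintype ι]

theorem sub_weightedSum_affine [CommRing 𝕜] [AddCommGroup E] [Module 𝕜 E]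
    {W : ι → 𝕜} (hW : ∑ i, W i = 1) (c : E) (d : ι → E) (t : 𝕜) (i : ι) :
    (c + t • d i) - ∑ k, W k • (c + t • d k) = t • (d i - ∑ k, W k • d k) := by
  simp only [smul_add, Finset.sum_add_distrib, ← Finset.sum_smul, hW, one_smul, smul_sub,
    Finset.smul_sum, smul_comm t]
  abel

theorem isLittleO_sub_weightedSum_sub [NormedField 𝕜] [SeminormedAddCommGroup E]
    [NormedSpace 𝕜 E] {l : Filter α} {g : α → ℝ} (W : ι → 𝕜) {a b : ι → α → E}
    (hab : ∀ k, (fun t => a k t - b k t) =o[l] g) (i : ι) :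
    (fun t => (a i t - ∑ k, W k • a k t) - (b i t - ∑ k, W k • b k t)) =o[l] g := by
  have hmean : (fun t => ∑ k, W k • (a k t - b k t)) =o[l] g :=
    IsLittleO.fun_sum fun k _ => (hab k).const_smul_left (W k)
  refine ((hab i).sub hmean).congr_left fun t => ?_
  simp only [smul_sub, Finset.sum_sub_distrib]
  abel

end WeightedMean

theorem HasFDerivAt.isLittleO_comp_add_smul {𝕜 E F : Type*} [NontriviallyNormedField 𝕜]
    [NormedAddCommGroup E] [NormedSpace 𝕜 E] [NormedAddCommGroup F] [NormedSpace 𝕜 F]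
    {f : E → F} {f' : E →L[𝕜] F} {x : E} (hf : HasFDerivAt f f' x) (v : E) :
    (fun t : 𝕜 => f (x + t • v) - (f x + t • f' v)) =o[𝓝 0] fun t => t := by
  have hline : HasDerivAt (fun t : 𝕜 => x + t • v) v 0 := by
    simpa using ((hasDerivAt_id (0 : 𝕜)).smul_const v).const_add x
  have hcomp := (hasDerivAt_iff_isLittleO.1 <|
    (show HasFDerivAt f f' (x + (0 : 𝕜) • v) by simpa using hf).comp_hasDerivAt 0 hline)
  refine hcomp.congr (fun t => ?_) fun t => by simp
  simp only [Function.comp_apply, sub_zero, zero_smul, add_zero]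
  abel

theorem spukf_covariance_error_little_o
    (n N : ℕ) (F : EuclideanSpace ℝ (Fin n) → EuclideanSpace ℝ (Fin n))
    (x : EuclideanSpace ℝ (Fin n)) (hF : ContDiffAt ℝ 2 F x)
    (u : Fin (N + 1) → EuclideanSpace ℝ (Fin n))
    (W : Fin (N + 1) → ℝ) (hW : ∑ i, W i = 1)
    (Y Ytilde : Fin (N + 1) → ℝ → EuclideanSpace ℝ (Fin n))
    (hY : ∀ i ε, Y i ε = F (x + ε • u i))
    (hYt : ∀ i ε, Ytilde i ε = F x + ε • fderiv ℝ F x (u i))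
    (Yhat Ytildehat : ℝ → EuclideanSpace ℝ (Fin n))
    (hYhat : ∀ ε, Yhat ε = ∑ i, W i • Y i ε)
    (hYtildehat : ∀ ε, Ytildehat ε = ∑ i, W i • Ytilde i ε)
    (P Ptilde : ℝ → Matrix (Fin n) (Fin n) ℝ)
    (hP : ∀ ε, P ε = ∑ i, W i •
      vecMulVec (fun j => (Y i ε - Yhat ε) j) (fun j => (Y i ε - Yhat ε) j))
    (hPt : ∀ ε, Ptilde ε = ∑ i, W i •
      vecMulVec (fun j => (Ytilde i ε - Ytildehat ε) j)
        (fun j => (Ytilde i ε - Ytildehat ε) j)) :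
    (fun ε : ℝ => P ε - Ptilde ε) =o[nhds 0] (fun ε : ℝ => ε ^ 2) := by
  -- `coords v` unfolds to `fun j => v j`, the form in which `P` and `Ptilde` are given.
  set coords := EuclideanSpace.equiv (Fin n) ℝ
  have hremainder : ∀ i, (fun ε => Y i ε - Ytilde i ε) =o[𝓝 0] fun ε => ε := fun i => by
    simpa only [hY, hYt] using
      (hF.differentiableAt two_ne_zero).hasFDerivAt.isLittleO_comp_add_smul (u i)
  have hdev : ∀ i, (fun ε => (Y i ε - Yhat ε) - (Ytilde i ε - Ytildehat ε)) =o[𝓝 0]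
      fun ε => ε := fun i => by
    simpa only [hYhat, hYtildehat] using isLittleO_sub_weightedSum_sub W hremainder i
  have hlin : ∀ i, (fun ε => Ytilde i ε - Ytildehat ε) =O[𝓝 0] fun ε => ε := fun i => by
    refine isBigO_of_le' (c := ‖fderiv ℝ F x (u i) - ∑ k, W k • fderiv ℝ F x (u k)‖) _
      fun ε => le_of_eq ?_
    simp only [hYtildehat, hYt]
    rw [sub_weightedSum_affine hW (F x) (fun k => fderiv ℝ F x (u k)), norm_smul, mul_comm]
  have hterm : ∀ i, (fun ε => vecMulVec (coords (Y i ε - Yhat ε)) (coords (Y i ε - Yhat ε))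
      - vecMulVec (coords (Ytilde i ε - Ytildehat ε)) (coords (Ytilde i ε - Ytildehat ε)))
      =o[𝓝 0] fun ε => ε ^ 2 := fun i =>
    isLittleO_vecMulVec_self_sub_vecMulVec_self
      ((coords.toContinuousLinearMap.isBigO_comp _ _).trans_isLittleO
        (by simpa only [map_sub] using hdev i))
      ((coords.toContinuousLinearMap.isBigO_comp _ _).trans (hlin i))
  refine (IsLittleO.fun_sum (s := .univ) fun i _ => (hterm i).const_smul_left (W i)).congr_left
    fun ε => ?_
  simp only [hP, hPt, Pi.smul_apply, smul_sub, Finset.sum_sub_distrib]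
  rfl
end

section
/- Let F : ℝⁿ → ℝⁿ be twice continuously differentiable at x and h : ℝⁿ → ℝᵐ continuously differentiable at F(x) (maps between Euclidean spaces), let u_0, …, u_N ∈ ℝⁿ and real weights W_0, …, W_N be fixed. Define ē_z(ε) = Σ_{i=0}^{N} W_i·[h(F(x + ε·u_i)) − h(F(x) + ε·(fderiv ℝ F x) u_i)]. Then ē_z is big-O of ε ↦ ε² as ε → 0. -/
/-!
Since `F` is `C²`, its first-order Taylor remainder along the line `ε ↦ x + ε • uᵢ` is
`O(ε²)`: `DF` is Lipschitz near `x`, so the mean value inequality bounds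
`F(x + v) - F x - DF(x) v` by `K ‖v‖²`. Since `h` is `C¹`, it is Lipschitz near `F x`, so
replacing the exact sigma point `F(x + ε • uᵢ)` by its linearisation `F x + ε • DF(x) uᵢ` changes
`h` by at most a constant times that remainder. Summing finitely many such terms preserves `O(ε²)`.
-/

open Asymptotics Filter Topology

section TaylorRemainder

variable {E G : Type*} [NormedAddCommGroup E] [NormedSpace ℝ E]
  [NormedAddCommGroup G] [NormedSpace ℝ G] {f : E → G} {x : E}

theorem tendsto_add_smul_nhds_zero (x v : E) :
    Tendsto (fun ε : ℝ => x + ε • v) (𝓝 0) (𝓝 x) := by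
  simpa using ((continuous_id.smul continuous_const).const_add x).tendsto (0 : ℝ)

theorem ContDiffAt.isBigO_sub_sub_fderiv (hf : ContDiffAt ℝ 2 f x) :
    (fun y => f y - f x - fderiv ℝ f x (y - x)) =O[𝓝 x] (fun y => ‖y - x‖ ^ 2) := by
  obtain ⟨K, t, ht, hlip⟩ := (hf.fderiv_right (m := 1) le_rfl).exists_lipschitzOnWith
  obtain ⟨δ, hδ, hball⟩ := Metric.mem_nhds_iff.1 <| inter_mem ht <|
    (hf.eventually (by simp)).mono fun _ hy => hy.differentiableAt two_ne_zero
  refine .of_bound K ?_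
  filter_upwards [Metric.ball_mem_nhds x hδ] with y hy
  have hsub : Metric.closedBall x ‖y - x‖ ⊆ Metric.ball x δ :=
    Metric.closedBall_subset_ball (by rwa [← dist_eq_norm])
  have hderiv : ∀ z ∈ Metric.closedBall x ‖y - x‖,
      ‖fderiv ℝ f z - fderiv ℝ f x‖ ≤ K * ‖y - x‖ := fun z hz => by
    have hlip_z := hlip.dist_le_mul _ (hball (hsub hz)).1 _ (hball (Metric.mem_ball_self hδ)).1
    rw [dist_eq_norm, dist_eq_norm] at hlip_z
    exact hlip_z.trans (by gcongr; rwa [← dist_eq_norm])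
  calc ‖f y - f x - fderiv ℝ f x (y - x)‖
      ≤ K * ‖y - x‖ * ‖y - x‖ :=
        (convex_closedBall x _).norm_image_sub_le_of_norm_fderiv_le'
          (fun z hz => (hball (hsub hz)).2) hderiv
          (Metric.mem_closedBall_self (norm_nonneg _)) (by simp [dist_eq_norm])
    _ = K * ‖‖y - x‖ ^ 2‖ := by rw [norm_pow, norm_norm]; ring

theorem ContDiffAt.isBigO_sub_sub_fderiv_line (hf : ContDiffAt ℝ 2 f x) (v : E) :
    (fun ε : ℝ => f (x + ε • v) - f x - ε • fderiv ℝ f x v) =O[𝓝 0] (fun ε => ε ^ 2) := by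
  refine ((hf.isBigO_sub_sub_fderiv.comp_tendsto (tendsto_add_smul_nhds_zero x v)).congr_left
    fun ε => ?_).trans ?_
  · simp [map_smul]
  · exact .of_bound (‖v‖ ^ 2) (.of_forall fun ε => by simp [norm_smul, mul_pow, mul_comm])

end TaylorRemainder

theorem HasStrictFDerivAt.isBigO_comp_sub_comp {𝕜 E G α : Type*} [NontriviallyNormedField 𝕜]
    [NormedAddCommGroup E] [NormedSpace 𝕜 E] [NormedAddCommGroup G] [NormedSpace 𝕜 G]
    {g : E → G} {g' : E →L[𝕜] G} {y : E} (hg : HasStrictFDerivAt g g' y) {l : Filter α}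
    {a b : α → E} (ha : Tendsto a l (𝓝 y)) (hb : Tendsto b l (𝓝 y)) :
    (fun t => g (a t) - g (b t)) =O[l] (fun t => a t - b t) :=
  hg.isBigO_sub.comp_tendsto (ha.prodMk_nhds hb)

theorem spukf_predicted_measurement_error_second_order
    (n m N : ℕ) (F : EuclideanSpace ℝ (Fin n) → EuclideanSpace ℝ (Fin n))
    (h : EuclideanSpace ℝ (Fin n) → EuclideanSpace ℝ (Fin m))
    (x : EuclideanSpace ℝ (Fin n))
    (hF : ContDiffAt ℝ 2 F x) (hh : ContDiffAt ℝ 1 h (F x))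
    (u : Fin (N + 1) → EuclideanSpace ℝ (Fin n)) (W : Fin (N + 1) → ℝ) :
    (fun ε : ℝ =>
        ∑ i, W i • (h (F (x + ε • u i)) - h (F x + ε • fderiv ℝ F x (u i))))
      =O[nhds 0] (fun ε : ℝ => ε ^ 2) := by
  refine IsBigO.fun_sum fun i _ => IsBigO.const_smul_left ?_ (W i)
  have hexact : Tendsto (fun ε : ℝ => F (x + ε • u i)) (𝓝 0) (𝓝 (F x)) :=
    hF.continuousAt.tendsto.comp (tendsto_add_smul_nhds_zero x (u i))
  refine ((hh.hasStrictFDerivAt one_ne_zero).isBigO_comp_sub_comp hexact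
    (tendsto_add_smul_nhds_zero _ _)).trans ?_
  simpa only [sub_sub] using hF.isBigO_sub_sub_fderiv_line (u i)
end

section
/- Let F : ℝⁿ → ℝⁿ be twice continuously differentiable at x and h : ℝⁿ → ℝᵐ continuously differentiable at F(x), let u_0, …, u_N ∈ ℝⁿ and real weights W_0, …, W_N with Σ_i W_i = 1 be fixed. For ε ∈ ℝ define exact sigma points Y_i(ε) = F(x + ε·u_i) with measurements Z_i(ε) = h(Y_i(ε)), approximate sigma points Ỹ_i(ε) = F(x) + ε·(fderiv ℝ F x) u_i with measurements Z̃_i(ε) = h(Ỹ_i(ε)), weighted means Ŷ, Ẑ, Ỹ, Z̃ of these families, and cross-covariances P_{YZ}(ε) = Σ_i W_i·(Y_i − Ŷ)(Z_i − Ẑ)ᵀ and P̃_{YZ}(ε) = Σ_i W_i·(Ỹ_i − Ỹ)(Z̃_i − Z̃)ᵀ (weighted sums of outer-product matrices). Then P_{YZ}(ε) − P̃_{YZ}(ε) is little-o of ε ↦ ε² as ε → 0. -/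
/-!
Write `a_i = Y_i - Ŷ`, `b_i = Z_i - Ẑ` and `ã_i`, `b̃_i` for the approximate counterparts.
Differentiability of `F` at `x` gives `Y_i - Ỹ_i = o(ε)`. Since `h` is `C¹`, hence strictly
differentiable, at `F x`, `h p - h q = O(p - q)` as `p, q → F x`, so also `Z_i - Z̃_i = o(ε)`.
Centring preserves these `o(ε)` estimates, and, as `Σ W_i = 1`, it keeps `ã_i` and `b_i` at
`O(ε)`. Bilinearity of the outer product then gives
`a_i b_iᵀ - ã_i b̃_iᵀ = (a_i - ã_i) b_iᵀ + ã_i (b_i - b̃_i)ᵀ = o(ε²)`.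
-/

open Asymptotics Filter Matrix Topology

attribute [local instance] Matrix.normedAddCommGroup Matrix.normedSpace

section Calculus

variable {𝕜 E F : Type*} [NontriviallyNormedField 𝕜] [NormedAddCommGroup E] [NormedSpace 𝕜 E]
  [NormedAddCommGroup F] [NormedSpace 𝕜 F]

theorem isBigO_smul_const_self (l : Filter 𝕜) (v : E) :
    (fun t : 𝕜 => t • v) =O[l] fun t => t :=
  isBigO_of_le' (c := ‖v‖) _ fun t => by rw [norm_smul, mul_comm]

theorem HasFDerivAt.isLittleO_sub_along_line {f : E → F} {f' : E →L[𝕜] F} {x : E}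
    (hf : HasFDerivAt f f' x) (v : E) :
    (fun t : 𝕜 => f (x + t • v) - (f x + t • f' v)) =o[𝓝 0] fun t => t := by
  have hline : Tendsto (fun t : 𝕜 => t • v) (𝓝 0) (𝓝 0) := by
    simpa using (tendsto_id (x := 𝓝 (0 : 𝕜))).smul_const v
  refine (((hasFDerivAt_iff_isLittleO_nhds_zero.1 hf).comp_tendsto hline).trans_isBigO
    (isBigO_smul_const_self _ v)).congr_left fun t => ?_
  simp only [Function.comp_apply, map_smul]
  abel

theorem HasStrictFDerivAt.isBigO_comp_sub_comp_s9 {α : Type*} {f : E → F} {f' : E →L[𝕜] F}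
    {x : E} (hf : HasStrictFDerivAt f f' x) {p q : α → E} {l : Filter α}
    (hp : Tendsto p l (𝓝 x)) (hq : Tendsto q l (𝓝 x)) :
    (fun t => f (p t) - f (q t)) =O[l] fun t => p t - q t :=
  hf.isBigO_sub.comp_tendsto (hp.prodMk_nhds hq)

end Calculus

theorem IsBoundedBilinearMap.isLittleO_sub_of_isLittleO {𝕜 E F G α : Type*}
    [NontriviallyNormedField 𝕜] [NormedAddCommGroup E] [NormedSpace 𝕜 E]
    [NormedAddCommGroup F] [NormedSpace 𝕜 F] [NormedAddCommGroup G] [NormedSpace 𝕜 G]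
    {B : E × F → G} (hB : IsBoundedBilinearMap 𝕜 B) {l : Filter α} {a a' : α → E}
    {b b' : α → F} {f g : α → ℝ} (ha : (fun t => a t - a' t) =o[l] f) (hb : b =O[l] g)
    (ha' : a' =O[l] f) (hb' : (fun t => b t - b' t) =o[l] g) :
    (fun t => B (a t, b t) - B (a' t, b' t)) =o[l] fun t => f t * g t := by
  have hsplit : ∀ t, B (a t, b t) - B (a' t, b' t) =
      B (a t - a' t, b t) + B (a' t, b t - b' t) := fun t => by
    rw [hB.map_sub_left, hB.map_sub_right]; abel
  have hleft := hB.isBigO_comp.trans_isLittleO (ha.norm_left.mul_isBigO hb.norm_left)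
  have hright := hB.isBigO_comp.trans_isLittleO (ha'.norm_left.mul_isLittleO hb'.norm_left)
  exact (hleft.add hright).congr_left fun t => (hsplit t).symm

section OuterProduct

variable {𝕜 ι κ : Type*} [NontriviallyNormedField 𝕜] [Fintype ι] [Fintype κ]

theorem Matrix.norm_vecMulVec_le_s9 (a : EuclideanSpace 𝕜 ι) (b : EuclideanSpace 𝕜 κ) :
    ‖vecMulVec a b‖ ≤ ‖a‖ * ‖b‖ := by
  refine (norm_le_iff (by positivity)).2 fun i j => ?_
  rw [vecMulVec_apply, norm_mul]
  exact mul_le_mul (PiLp.norm_apply_le a i) (PiLp.norm_apply_le b j) (norm_nonneg _)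
    (norm_nonneg _)

theorem Matrix.isBoundedBilinearMap_vecMulVec :
    IsBoundedBilinearMap 𝕜 fun p : EuclideanSpace 𝕜 ι × EuclideanSpace 𝕜 κ =>
      vecMulVec p.1 p.2 where
  add_left _ _ _ := add_vecMulVec _ _ _
  smul_left _ _ _ := smul_vecMulVec _ _ _
  add_right _ _ _ := vecMulVec_add _ _ _
  smul_right _ _ _ := vecMulVec_smul _ _ _
  bound := ⟨1, one_pos, fun a b => (one_mul ‖a‖).symm ▸ norm_vecMulVec_le_s9 a b⟩

end OuterProduct

section WeightedMean

variable {ι α E : Type*} [Fintype ι] [NormedAddCommGroup E] [NormedSpace ℝ E] {l : Filter α}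
  {g : α → ℝ} (W : ι → ℝ)

theorem isBigO_sub_weighted_sum {v : ι → α → E} {c : E} (hW : ∑ i, W i = 1)
    (hv : ∀ i, (fun t => v i t - c) =O[l] g) (i : ι) :
    (fun t => v i t - ∑ j, W j • v j t) =O[l] g := by
  have hsum : (fun t => ∑ j, W j • (v j t - c)) =O[l] g :=
    IsBigO.fun_sum fun j _ => (hv j).const_smul_left (W j)
  refine ((hv i).sub hsum).congr_left fun t => ?_
  simp only [smul_sub, Finset.sum_sub_distrib, ← Finset.sum_smul, hW, one_smul]
  abel

theorem isLittleO_sub_weighted_sum_sub {v w : ι → α → E}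
    (hvw : ∀ i, (fun t => v i t - w i t) =o[l] g) (i : ι) :
    (fun t => (v i t - ∑ j, W j • v j t) - (w i t - ∑ j, W j • w j t)) =o[l] g := by
  have hsum : (fun t => ∑ j, W j • (v j t - w j t)) =o[l] g :=
    IsLittleO.fun_sum fun j _ => (hvw j).const_smul_left (W j)
  refine ((hvw i).sub hsum).congr_left fun t => ?_
  simp only [smul_sub, Finset.sum_sub_distrib]
  abel

end WeightedMean

section CrossCovariance

variable {ι κ μ : Type*} [Fintype ι] [Fintype κ] [Fintype μ]

def weightedCrossCov (W : ι → ℝ) (y : ι → EuclideanSpace ℝ κ)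
    (z : ι → EuclideanSpace ℝ μ) : Matrix κ μ ℝ :=
  ∑ i, W i • vecMulVec (y i - ∑ j, W j • y j) (z i - ∑ j, W j • z j)

theorem isLittleO_weightedCrossCov_sub {α : Type*} {l : Filter α} {g : α → ℝ} (W : ι → ℝ)
    (hW : ∑ i, W i = 1) {y y' : ι → α → EuclideanSpace ℝ κ}
    {z z' : ι → α → EuclideanSpace ℝ μ}
    {c : EuclideanSpace ℝ κ} {d : EuclideanSpace ℝ μ}
    (hy_sub : ∀ i, (fun t => y i t - y' i t) =o[l] g)
    (hz_sub : ∀ i, (fun t => z i t - z' i t) =o[l] g)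
    (hy'_bigO : ∀ i, (fun t => y' i t - c) =O[l] g) (hz_bigO : ∀ i, (fun t => z i t - d) =O[l] g) :
    (fun t => weightedCrossCov W (y · t) (z · t) - weightedCrossCov W (y' · t) (z' · t))
      =o[l] fun t => g t * g t := by
  have hterm : ∀ i, (fun t => W i • (vecMulVec (y i t - ∑ j, W j • y j t)
      (z i t - ∑ j, W j • z j t) - vecMulVec (y' i t - ∑ j, W j • y' j t)
      (z' i t - ∑ j, W j • z' j t))) =o[l] fun t => g t * g t := fun i =>
    IsLittleO.const_smul_left (isBoundedBilinearMap_vecMulVec.isLittleO_sub_of_isLittleO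
      (isLittleO_sub_weighted_sum_sub W hy_sub i) (isBigO_sub_weighted_sum W hW hz_bigO i)
      (isBigO_sub_weighted_sum W hW hy'_bigO i) (isLittleO_sub_weighted_sum_sub W hz_sub i))
      (W i)
  refine (IsLittleO.fun_sum (s := .univ) fun i _ => hterm i).congr_left fun t => ?_
  simp only [weightedCrossCov, smul_sub, Finset.sum_sub_distrib]

end CrossCovariance

theorem spukf_cross_covariance_error_little_o
    (n m N : ℕ) (F : EuclideanSpace ℝ (Fin n) → EuclideanSpace ℝ (Fin n))
    (h : EuclideanSpace ℝ (Fin n) → EuclideanSpace ℝ (Fin m))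
    (x : EuclideanSpace ℝ (Fin n))
    (hF : ContDiffAt ℝ 2 F x) (hh : ContDiffAt ℝ 1 h (F x))
    (u : Fin (N + 1) → EuclideanSpace ℝ (Fin n))
    (W : Fin (N + 1) → ℝ) (hW : ∑ i, W i = 1)
    (Y Ytilde : Fin (N + 1) → ℝ → EuclideanSpace ℝ (Fin n))
    (hY : ∀ i ε, Y i ε = F (x + ε • u i))
    (hYt : ∀ i ε, Ytilde i ε = F x + ε • fderiv ℝ F x (u i))
    (Z Ztilde : Fin (N + 1) → ℝ → EuclideanSpace ℝ (Fin m))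
    (hZ : ∀ i ε, Z i ε = h (Y i ε))
    (hZt : ∀ i ε, Ztilde i ε = h (Ytilde i ε))
    (Yhat Ytildehat : ℝ → EuclideanSpace ℝ (Fin n))
    (hYhat : ∀ ε, Yhat ε = ∑ i, W i • Y i ε)
    (hYtildehat : ∀ ε, Ytildehat ε = ∑ i, W i • Ytilde i ε)
    (Zhat Ztildehat : ℝ → EuclideanSpace ℝ (Fin m))
    (hZhat : ∀ ε, Zhat ε = ∑ i, W i • Z i ε)
    (hZtildehat : ∀ ε, Ztildehat ε = ∑ i, W i • Ztilde i ε)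
    (PYZ PYZtilde : ℝ → Matrix (Fin n) (Fin m) ℝ)
    (hPYZ : ∀ ε, PYZ ε = ∑ i, W i •
      vecMulVec (fun j => (Y i ε - Yhat ε) j) (fun k => (Z i ε - Zhat ε) k))
    (hPYZt : ∀ ε, PYZtilde ε = ∑ i, W i •
      vecMulVec (fun j => (Ytilde i ε - Ytildehat ε) j)
        (fun k => (Ztilde i ε - Ztildehat ε) k)) :
    (fun ε : ℝ => PYZ ε - PYZtilde ε) =o[nhds 0] (fun ε : ℝ => ε ^ 2) := by
  have hFx : HasFDerivAt F (fderiv ℝ F x) x := (hF.differentiableAt two_ne_zero).hasFDerivAt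
  have hhFx := hh.hasStrictFDerivAt one_ne_zero
  have hYY : ∀ i, (fun ε => Y i ε - Ytilde i ε) =o[𝓝 0] fun ε => ε := fun i => by
    simpa only [hY, hYt] using hFx.isLittleO_sub_along_line (u i)
  have hYtF : ∀ i, (fun ε => Ytilde i ε - F x) =O[𝓝 0] fun ε => ε := fun i => by
    simpa only [hYt, add_sub_cancel_left] using isBigO_smul_const_self _ (fderiv ℝ F x (u i))
  have hYF : ∀ i, (fun ε => Y i ε - F x) =O[𝓝 0] fun ε => ε := fun i =>
    ((hYY i).isBigO.add (hYtF i)).congr_left fun ε => sub_add_sub_cancel _ _ _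
  have hY_tendsto : ∀ i, Tendsto (Y i) (𝓝 0) (𝓝 (F x)) := fun i =>
    tendsto_sub_nhds_zero_iff.1 ((hYF i).trans_tendsto tendsto_id)
  have hYt_tendsto : ∀ i, Tendsto (Ytilde i) (𝓝 0) (𝓝 (F x)) := fun i =>
    tendsto_sub_nhds_zero_iff.1 ((hYtF i).trans_tendsto tendsto_id)
  have hZZ : ∀ i, (fun ε => Z i ε - Ztilde i ε) =o[𝓝 0] fun ε => ε := fun i => by
    simpa only [hZ, hZt] using
      (hhFx.isBigO_comp_sub_comp_s9 (hY_tendsto i) (hYt_tendsto i)).trans_isLittleO (hYY i)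
  have hZh : ∀ i, (fun ε => Z i ε - h (F x)) =O[𝓝 0] fun ε => ε := fun i => by
    simpa only [hZ] using
      (hhFx.isBigO_comp_sub_comp_s9 (hY_tendsto i) tendsto_const_nhds).trans (hYF i)
  refine (isLittleO_weightedCrossCov_sub W hW hYY hZZ hYtF hZh).congr (fun ε => ?_)
    fun ε => (sq ε).symm
  rw [hPYZ, hPYZt, weightedCrossCov, weightedCrossCov, hYhat, hYtildehat, hZhat, hZtildehat]
end
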